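/- The function μ(γ) = √(γ²+2γ)/(1+γ) − ln(1+γ)/((1+γ)·√(γ²+2γ)) is strictly increasing on (0, ∞). -/

import Mathlib

/-!
With `s = √(γ² + 2γ)`, so that `s² = (1 + γ)² - 1`, the derivative is
`μ'(γ) = (2(1 + γ)² - 1) · ln(1 + γ) / ((1 + γ)² s³)`, and every factor is positive for `γ > 0`.
-/

noncomputable def mu (γ : ℝ) : ℝ :=
  Real.sqrt (γ ^ 2 + 2 * γ) / (1 + γ) -
    Real.log (1 + γ) / ((1 + γ) * Real.sqrt (γ ^ 2 + 2 * γ))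

open Real

lemma hasDerivAt_sqrt_sq_add_two_mul {x : ℝ} (hx : x ^ 2 + 2 * x ≠ 0) :
    HasDerivAt (fun γ => √(γ ^ 2 + 2 * γ)) ((1 + x) / √(x ^ 2 + 2 * x)) x := by
  refine (((hasDerivAt_pow 2 x).fun_add ((hasDerivAt_id' x).const_mul 2)).sqrt hx).congr_deriv ?_
  field_simp
  ring

lemma hasDerivAt_mu {x : ℝ} (hx : 0 < x ^ 2 + 2 * x) :
    HasDerivAt mu
      ((2 * (1 + x) ^ 2 - 1) * log (1 + x) / ((1 + x) ^ 2 * √(x ^ 2 + 2 * x) ^ 3)) x := by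
  have h1 : 1 + x ≠ 0 := fun h => by nlinarith
  have hs : √(x ^ 2 + 2 * x) ≠ 0 := (sqrt_pos.2 hx).ne'
  have hs2 : √(x ^ 2 + 2 * x) ^ 2 = x ^ 2 + 2 * x := sq_sqrt hx.le
  have hsqrt := hasDerivAt_sqrt_sq_add_two_mul hx.ne'
  have hlin : HasDerivAt (fun γ : ℝ => 1 + γ) 1 x := (hasDerivAt_id' x).const_add 1
  refine ((hsqrt.fun_div hlin h1).fun_sub
    ((hlin.log h1).fun_div (hlin.fun_mul hsqrt) (mul_ne_zero h1 hs))).congr_deriv ?_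
  set s := √(x ^ 2 + 2 * x)
  field_simp
  linear_combination (log (1 + x) - s ^ 2) * hs2

/-- μ is strictly increasing on (0, ∞). -/
theorem stmt_9 : StrictMonoOn mu (Set.Ioi (0 : ℝ)) := by
  have hq {x : ℝ} (hx : x ∈ Set.Ioi (0 : ℝ)) : 0 < x ^ 2 + 2 * x := by
    have : (0 : ℝ) < x := hx
    positivity
  refine strictMonoOn_of_deriv_pos (convex_Ioi 0)
    (fun x hx => (hasDerivAt_mu (hq hx)).continuousAt.continuousWithinAt) fun x hx => ?_
  rw [interior_Ioi] at hx
  have hx0 : (0 : ℝ) < x := hx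
  rw [(hasDerivAt_mu (hq hx)).deriv]
  have hlog : 0 < log (1 + x) := log_pos (by linarith)
  have hs : 0 < √(x ^ 2 + 2 * x) := sqrt_pos.2 (hq hx)
  have hcoef : 0 < 2 * (1 + x) ^ 2 - 1 := by nlinarith
  positivity
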